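/- arXiv:2206.11256 — 2 statements merged into one kernel-verified Lean document; each statement's English description precedes it below -/
import Mathlib

section
/- ζ(3) = (4/7)(π² ln(2)/2 + 4 ∫₀^{π/2} x ln(sin x) dx). -/
/-!
For `0 < x < π / 2` the Fourier expansion `log (2 sin x) = -∑ cos (2 n x) / n`, multiplied by `x`
and integrated termwise using `∫₀^{π/2} x cos (2 n x) dx = ((-1)ⁿ - 1) / (4 n²)`, gives
`∫₀^{π/2} x log (sin x) dx = -π² log 2 / 8 + (1/2) ∑_{n odd} 1 / n³ = -π² log 2 / 8 + (7/16) ζ(3)`.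
The expansion converges only conditionally, so it is inserted with an Abel factor `rⁿ`: for
`|r| < 1` the series `∑ rⁿ cos (n θ) / n = -log (1 - 2 r cos θ + r²) / 2` (the real part of
`-log (1 - r e^{iθ})`) converges uniformly and may be integrated termwise. As `r → 1⁻` the integrals
converge by dominated convergence, since `2 sin² x ≤ 1 - 2 r cos (2 x) + r² ≤ 4` for `r ≥ 1/2`, and
the coefficient series by Abel's limit theorem.
-/

open Real Filter Topology

-- The `n = 0` term is `0` because `x / 0 = 0`, as in Mathlib's series `-log (1 - z) = ∑ zⁿ / n`.
theorem hasSum_pow_mul_cos_div {r : ℝ} (hr : |r| < 1) (θ : ℝ) :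
    HasSum (fun n : ℕ => r ^ n * cos (n * θ) / n) (-log (1 - 2 * r * cos θ + r ^ 2) / 2) := by
  set z : ℂ := r * Complex.exp (θ * Complex.I)
  have hz : ‖z‖ < 1 := by simpa [z, Complex.norm_exp_ofReal_mul_I] using hr
  have hnormSq : Complex.normSq (1 - z) = 1 - 2 * r * cos θ + r ^ 2 := by
    simp only [Complex.normSq_apply, z, Complex.sub_re, Complex.sub_im, Complex.one_re,
      Complex.one_im, Complex.re_ofReal_mul, Complex.im_ofReal_mul, Complex.exp_ofReal_mul_I_re,
      Complex.exp_ofReal_mul_I_im]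
    linear_combination r ^ 2 * sin_sq_add_cos_sq θ
  convert Complex.hasSum_re (Complex.hasSum_taylorSeries_neg_log hz) using 1
  · ext n
    rw [Complex.div_natCast_re, mul_pow, ← Complex.exp_nat_mul, ← mul_assoc,
      ← Complex.ofReal_natCast, ← Complex.ofReal_mul, ← Complex.ofReal_pow,
      Complex.re_ofReal_mul, Complex.exp_ofReal_mul_I_re]
  · rw [Complex.neg_re, Complex.log_re, ← hnormSq, Complex.normSq_eq_norm_sq, Real.log_pow]
    push_cast
    ring

theorem integral_mul_cos_mul {a : ℝ} (ha : a ≠ 0) (b : ℝ) :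
    ∫ x in 0..b, x * cos (a * x) = b * sin (a * b) / a + (cos (a * b) - 1) / a ^ 2 := by
  have hderiv (x : ℝ) :
      HasDerivAt (fun x => x * sin (a * x) / a + cos (a * x) / a ^ 2) (x * cos (a * x)) x := by
    have hax : HasDerivAt (a * ·) a x := by simpa using (hasDerivAt_id x).const_mul a
    refine ((((hasDerivAt_id' x).mul hax.sin).div_const a).add
      (hax.cos.div_const (a ^ 2))).congr_deriv ?_
    field_simp
    ring
  rw [intervalIntegral.integral_eq_sub_of_hasDerivAt (fun x _ => hderiv x)
    (by apply Continuous.intervalIntegrable; fun_prop)]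
  simp only [mul_zero, sin_zero, zero_div, cos_zero, one_div, zero_add]
  ring

theorem integral_mul_cos_two_nat_mul {n : ℕ} (hn : n ≠ 0) :
    ∫ x in 0..π / 2, x * cos (n * (2 * x)) = ((-1) ^ n - 1) / (4 * n ^ 2) := by
  have hn' : (2 * n : ℝ) ≠ 0 := by positivity
  simp_rw [← mul_assoc, mul_comm (n : ℝ) 2]
  rw [integral_mul_cos_mul hn', show 2 * n * (π / 2) = n * π by ring, sin_nat_mul_pi,
    cos_nat_mul_pi]
  ring

theorem hasSum_integral_mul_log_one_sub_two_mul_cos_add_sq {r : ℝ} (hr : |r| < 1) :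
    HasSum (fun n : ℕ => ((-1) ^ n - 1) / (n : ℝ) ^ 3 / 4 * r ^ n)
      (∫ x in 0..π / 2, x * (-log (1 - 2 * r * cos (2 * x) + r ^ 2) / 2)) := by
  have hterm (n : ℕ) : ∫ x in 0..π / 2, x * (r ^ n * cos (n * (2 * x)) / n) =
      ((-1) ^ n - 1) / (n : ℝ) ^ 3 / 4 * r ^ n := by
    rcases eq_or_ne n 0 with rfl | hn
    · simp
    have hn' : (n : ℝ) ≠ 0 := by exact_mod_cast hn
    have hfun : (fun x => x * (r ^ n * cos (n * (2 * x)) / n)) =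
        fun x => r ^ n / n * (x * cos (n * (2 * x))) := by
      ext; ring
    rw [hfun, intervalIntegral.integral_const_mul, integral_mul_cos_two_nat_mul hn]
    field_simp
  have hcoef (n : ℕ) (x : ℝ) : |r ^ n * cos (n * (2 * x)) / n| ≤ |r| ^ n := by
    rw [abs_div, abs_mul, abs_pow, Nat.abs_cast]
    have hcos : |r| ^ n * |cos (n * (2 * x))| ≤ |r| ^ n :=
      mul_le_of_le_one_right (by positivity) (abs_cos_le_one _)
    rcases eq_or_ne n 0 with rfl | hn
    · simp
    exact (div_le_self (by positivity) (by exact_mod_cast Nat.one_le_iff_ne_zero.2 hn)).trans hcos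
  refine funext hterm ▸ intervalIntegral.hasSum_integral_of_dominated_convergence
    (fun n _ => π / 2 * |r| ^ n) (fun n => ?_) (fun n => ?_) ?_ ?_ ?_
  · exact (Continuous.aestronglyMeasurable (by fun_prop))
  · refine .of_forall fun x hx => ?_
    rw [Set.uIoc_of_le (by positivity)] at hx
    rw [norm_mul, Real.norm_of_nonneg hx.1.le, Real.norm_eq_abs]
    exact mul_le_mul hx.2 (hcoef n x) (abs_nonneg _) (by positivity)
  · exact .of_forall fun _ _ => (summable_geometric_of_lt_one (abs_nonneg r) hr).mul_left _
  · exact intervalIntegrable_const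
  · exact .of_forall fun x _ => by
      simpa only [mul_div_assoc] using (hasSum_pow_mul_cos_div hr (2 * x)).mul_left x

theorem one_sub_two_mul_cos_two_mul_add_sq (r x : ℝ) :
    1 - 2 * r * cos (2 * x) + r ^ 2 = (1 - r) ^ 2 + 4 * r * sin x ^ 2 := by
  rw [cos_two_mul, cos_sq']
  ring

theorem abs_log_le_abs_log_add_abs_log {a b u : ℝ} (ha : 0 < a) (hau : a ≤ u) (hub : u ≤ b) :
    |log u| ≤ |log a| + |log b| :=
  (abs_le_max_abs_abs (log_le_log ha hau) (log_le_log (ha.trans_le hau) hub)).trans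
    (max_le_add_of_nonneg (abs_nonneg _) (abs_nonneg _))

theorem tendsto_integral_mul_log_one_sub_two_mul_cos_add_sq :
    Tendsto (fun r => ∫ x in 0..π / 2, x * (-log (1 - 2 * r * cos (2 * x) + r ^ 2) / 2))
      (𝓝[<] 1) (𝓝 (∫ x in 0..π / 2, x * (-log (4 * sin x ^ 2) / 2))) := by
  simp_rw [one_sub_two_mul_cos_two_mul_add_sq]
  have hsin {x : ℝ} (hx : x ∈ Set.uIoc 0 (π / 2)) : 0 < sin x := by
    rw [Set.uIoc_of_le (by positivity)] at hx
    exact sin_pos_of_pos_of_lt_pi hx.1 (by linarith [pi_pos, hx.2])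
  have hbound {r x : ℝ} (hr : r ∈ Set.Icc (1 / 2) 1) (hx : x ∈ Set.uIoc 0 (π / 2)) :
      ‖x * (-log ((1 - r) ^ 2 + 4 * r * sin x ^ 2) / 2)‖ ≤
        π / 2 * (|log 2 + 2 * log (sin x)| + log 4) := by
    have hx' := hx
    rw [Set.uIoc_of_le (by positivity)] at hx'
    have hs := hsin hx
    have hlog := abs_log_le_abs_log_add_abs_log (a := 2 * sin x ^ 2) (b := 4)
      (u := (1 - r) ^ 2 + 4 * r * sin x ^ 2) (by positivity)
      (by nlinarith [hr.1]) (by nlinarith [hr.1, hr.2, sin_sq_le_one x])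
    have hsplit : log (2 * sin x ^ 2) = log 2 + 2 * log (sin x) := by
      rw [log_mul two_ne_zero (by positivity), log_pow, Nat.cast_ofNat]
    rw [hsplit, abs_of_nonneg (log_nonneg (by norm_num : (1 : ℝ) ≤ 4))] at hlog
    rw [norm_mul, norm_div, norm_neg, Real.norm_of_nonneg hx'.1.le, Real.norm_eq_abs,
      Real.norm_two]
    gcongr
    · exact hx'.2
    · linarith [abs_nonneg (log ((1 - r) ^ 2 + 4 * r * sin x ^ 2))]
  refine intervalIntegral.tendsto_integral_filter_of_dominated_convergence
    (fun x => π / 2 * (|log 2 + 2 * log (sin x)| + log 4))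
    (.of_forall fun r => ?_) ?_ ?_ (.of_forall fun x hx => ?_)
  · exact Measurable.aestronglyMeasurable (by fun_prop)
  · filter_upwards [Ioo_mem_nhdsLT (show (1 / 2 : ℝ) < 1 by norm_num)] with r hr
    exact .of_forall fun x hx => hbound (Set.Ioo_subset_Icc_self hr) hx
  · exact ((intervalIntegrable_const.add (intervalIntegrable_log_sin.const_mul 2)).abs.add
      intervalIntegrable_const).const_mul _
  · have hcont : ContinuousAt (fun r => x * (-log ((1 - r) ^ 2 + 4 * r * sin x ^ 2) / 2)) 1 := by
      have : (1 - 1) ^ 2 + 4 * 1 * sin x ^ 2 ≠ 0 := by have := hsin hx; positivity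
      fun_prop (disch := exact this)
    simpa using hcont.tendsto.mono_left nhdsWithin_le_nhds

theorem hasSum_one_div_odd_pow {p : ℕ} (hp : 1 < p) :
    HasSum (fun k : ℕ => 1 / (2 * k + 1 : ℝ) ^ p)
      ((1 - 1 / 2 ^ p) * ∑' n : ℕ, 1 / (n : ℝ) ^ p) := by
  have hs : Summable fun n : ℕ => 1 / (n : ℝ) ^ p := summable_one_div_nat_pow.2 hp
  have heven : HasSum (fun k : ℕ => 1 / ((2 * k : ℕ) : ℝ) ^ p)
      ((∑' n : ℕ, 1 / (n : ℝ) ^ p) / 2 ^ p) :=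
    (hs.hasSum.div_const _).congr_fun fun k => by push_cast; rw [mul_pow]; field_simp
  have hodd : Summable fun k : ℕ => 1 / ((2 * k + 1 : ℕ) : ℝ) ^ p :=
    hs.comp_injective fun a b h => by simpa using h
  have hsplit := (HasSum.even_add_odd (f := fun n : ℕ => 1 / (n : ℝ) ^ p) heven
    hodd.hasSum).unique hs.hasSum
  convert hodd.hasSum using 1
  · push_cast; rfl
  · linear_combination (-1 : ℝ) * hsplit

theorem hasSum_neg_one_pow_sub_one_div_pow {p : ℕ} (hp : 1 < p) :
    HasSum (fun n : ℕ => ((-1) ^ n - 1) / (n : ℝ) ^ p)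
      (-2 * (1 - 1 / 2 ^ p) * ∑' n : ℕ, 1 / (n : ℝ) ^ p) := by
  have heven : HasSum (fun k : ℕ => ((-1) ^ (2 * k) - 1) / ((2 * k : ℕ) : ℝ) ^ p) 0 := by
    simp [pow_mul]
  have hodd : HasSum (fun k : ℕ => ((-1) ^ (2 * k + 1) - 1) / ((2 * k + 1 : ℕ) : ℝ) ^ p)
      (-2 * ((1 - 1 / 2 ^ p) * ∑' n : ℕ, 1 / (n : ℝ) ^ p)) :=
    ((hasSum_one_div_odd_pow hp).mul_left (-2)).congr_fun fun k => by
      rw [pow_succ, pow_mul]; push_cast; ring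
  simpa [mul_assoc] using
    HasSum.even_add_odd (f := fun n : ℕ => ((-1) ^ n - 1) / (n : ℝ) ^ p) heven hodd

theorem integral_mul_log_four_mul_sin_sq :
    ∫ x in 0..π / 2, x * (-log (4 * sin x ^ 2) / 2) =
      -(log 2 * π ^ 2 / 8) - ∫ x in 0..π / 2, x * log (sin x) := by
  have hpt : Set.EqOn (fun x => x * (-log (4 * sin x ^ 2) / 2))
      (fun x => -log 2 * x - x * log (sin x)) (Set.uIcc 0 (π / 2)) := by
    intro x hx
    rw [Set.uIcc_of_le (by positivity)] at hx
    rcases hx.1.eq_or_lt with rfl | hx0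
    · simp
    have hsin : sin x ≠ 0 := (sin_pos_of_pos_of_lt_pi hx0 (by linarith [pi_pos, hx.2])).ne'
    dsimp only
    rw [log_mul (by norm_num) (by positivity), log_pow, show (4 : ℝ) = 2 ^ 2 by norm_num, log_pow]
    push_cast
    ring
  have hint : IntervalIntegrable (fun x => x * log (sin x)) MeasureTheory.volume 0 (π / 2) :=
    intervalIntegrable_log_sin.continuousOn_mul continuousOn_id
  rw [intervalIntegral.integral_congr hpt,
    intervalIntegral.integral_sub (Continuous.intervalIntegrable (by fun_prop) _ _) hint,
    intervalIntegral.integral_const_mul, integral_id]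
  ring

theorem zeta3_log_sin_integral :
    (∑' n : ℕ, 1 / ((n : ℝ) + 1) ^ 3) =
      (4 / 7) * (π ^ 2 * Real.log 2 / 2 +
        4 * ∫ x in (0 : ℝ)..(π / 2), x * Real.log (Real.sin x)) := by
  have hζ : ∑' n : ℕ, 1 / ((n : ℝ) + 1) ^ 3 = ∑' n : ℕ, 1 / (n : ℝ) ^ 3 := by
    rw [(summable_one_div_nat_pow.2 (by norm_num : 1 < 3)).tsum_eq_zero_add]
    simp
  have hcoef := (hasSum_neg_one_pow_sub_one_div_pow (p := 3) (by norm_num)).div_const 4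
  have habel := Real.tendsto_tsum_powerSeries_nhdsWithin_lt hcoef.tendsto_sum_nat
  have hintegral : (fun r => ∑' n : ℕ, ((-1) ^ n - 1) / (n : ℝ) ^ 3 / 4 * r ^ n) =ᶠ[𝓝[<] 1]
      fun r => ∫ x in 0..π / 2, x * (-log (1 - 2 * r * cos (2 * x) + r ^ 2) / 2) := by
    filter_upwards [Ioo_mem_nhdsLT (show (-1 : ℝ) < 1 by norm_num)] with r hr
    exact (hasSum_integral_mul_log_one_sub_two_mul_cos_add_sq (abs_lt.2 hr)).tsum_eq
  have hlim := tendsto_nhds_unique (habel.congr' hintegral)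
    tendsto_integral_mul_log_one_sub_two_mul_cos_add_sq
  rw [integral_mul_log_four_mul_sin_sq] at hlim
  rw [hζ]
  linear_combination (-16 / 7 : ℝ) * hlim
end

section
/- ζ(3) = (4/7) ∫₀^{π/2} x(π - 2x) cot(x) dx. -/
/-!
Multiplying the telescoped identity `cot x = 2 ∑_{k<N} sin (2(k+1)x) + cos ((2N+1)x) / sin x`
by `x (π - 2x)` and integrating over `[0, π/2]` turns the sum into a partial sum of
`∑ (1 - (-1)^n) / n³ = (7/4) ζ(3)`, because `∫ x (π - 2x) sin (2nx) = (1 - (-1)^n) / (2n³)`.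
The remainder `∫ cos ((2N+1)x) · x (π - 2x) / sin x` tends to `0` by the Riemann–Lebesgue
lemma, as `x (π - 2x) / sin x` is bounded on `(0, π/2]`.
-/

open Real MeasureTheory Filter Set Topology Interval

theorem tendsto_integral_cos_mul_cocompact {f : ℝ → ℝ} (hf : Integrable f) :
    Tendsto (fun t => ∫ x, cos (t * x) * f x) (cocompact ℝ) (𝓝 0) := by
  have hscale : Tendsto (fun t : ℝ => t * (2 * π)⁻¹) (cocompact ℝ) (cocompact ℝ) :=
    (Homeomorph.mulRight₀ (2 * π)⁻¹ (by positivity)).isClosedEmbedding.tendsto_cocompact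
  have hRL := (Complex.continuous_re.tendsto 0).comp
    ((Real.tendsto_integral_exp_smul_cocompact fun x => (f x : ℂ)).comp hscale)
  rw [Complex.zero_re] at hRL
  refine hRL.congr fun t => ?_
  have hint : Integrable (fun x => Real.fourierChar (-(x * (t * (2 * π)⁻¹))) • (f x : ℂ)) :=
    hf.ofReal.bdd_smul 1 (by fun_prop) (.of_forall fun _ => (Circle.norm_coe _).le)
  rw [Function.comp_apply, Function.comp_apply, ← RCLike.re_to_complex, ← integral_re hint]
  congr 1 with x
  rw [Circle.smul_def, Real.fourierChar_apply, smul_eq_mul, RCLike.re_to_complex,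
    Complex.re_mul_ofReal, Complex.exp_ofReal_mul_I_re, ← cos_neg]
  field_simp

theorem tendsto_setIntegral_cos_mul_cocompact {f : ℝ → ℝ} {s : Set ℝ} (hs : MeasurableSet s)
    (hf : IntegrableOn f s) :
    Tendsto (fun t => ∫ x in s, cos (t * x) * f x) (cocompact ℝ) (𝓝 0) := by
  refine ((tendsto_integral_cos_mul_cocompact ((integrable_indicator_iff hs).2 hf)).congr
    fun t => ?_)
  rw [← integral_indicator hs]
  simp_rw [indicator_mul_right]

theorem tendsto_intervalIntegral_cos_mul_cocompact {f : ℝ → ℝ} {a b : ℝ}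
    (hf : IntervalIntegrable f volume a b) :
    Tendsto (fun t => ∫ x in a..b, cos (t * x) * f x) (cocompact ℝ) (𝓝 0) := by
  simpa only [intervalIntegral, sub_zero] using
    (tendsto_setIntegral_cos_mul_cocompact measurableSet_Ioc hf.1).sub
      (tendsto_setIntegral_cos_mul_cocompact measurableSet_Ioc hf.2)

theorem Real.cot_eq_two_mul_sum_sin_add_cos_div_sin {x : ℝ} (hx : sin x ≠ 0) (N : ℕ) :
    cot x = 2 * ∑ k ∈ Finset.range N, sin (2 * (k + 1) * x)
      + cos ((2 * N + 1) * x) / sin x := by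
  induction N with
  | zero => simp [cot_eq_cos_div_sin]
  | succ n ih =>
    have hcos : cos ((2 * n + 1) * x) - cos ((2 * (n + 1) + 1) * x)
        = 2 * sin (2 * (n + 1) * x) * sin x := by
      rw [cos_sub_cos, show ((2 * n + 1) * x + (2 * (n + 1) + 1) * x) / 2 = 2 * (n + 1) * x by ring,
        show ((2 * n + 1) * x - (2 * (n + 1) + 1) * x) / 2 = -x by ring, sin_neg]
      ring
    have hstep : cos ((2 * n + 1) * x) / sin x
        = 2 * sin (2 * (n + 1) * x) + cos ((2 * (n + 1) + 1) * x) / sin x := by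
      rw [div_eq_iff hx, add_mul (2 * sin _), div_mul_cancel₀ _ hx]
      linarith
    rw [ih, hstep, Finset.sum_range_succ]
    push_cast
    ring

theorem hasDerivAt_mul_pi_sub_two_mul_mul_sin_antideriv {a : ℝ} (ha : a ≠ 0) (x : ℝ) :
    HasDerivAt (fun x => ((2 * x ^ 2 - π * x) / a - 4 / a ^ 3) * cos (a * x)
        + (π - 4 * x) / a ^ 2 * sin (a * x))
      (x * (π - 2 * x) * sin (a * x)) x := by
  have hlin : HasDerivAt (fun x => a * x) a x := by simpa using (hasDerivAt_id' x).const_mul a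
  have hp : HasDerivAt (fun x => (2 * x ^ 2 - π * x) / a - 4 / a ^ 3) ((4 * x - π) / a) x :=
    ((((hasDerivAt_pow 2 x).const_mul 2).sub ((hasDerivAt_id' x).const_mul π)).div_const a
      |>.sub_const (4 / a ^ 3)).congr_deriv (by ring)
  have hq : HasDerivAt (fun x => (π - 4 * x) / a ^ 2) (-4 / a ^ 2) x :=
    ((((hasDerivAt_id' x).const_mul 4).const_sub π).div_const (a ^ 2)).congr_deriv (by ring)
  refine ((hp.mul hlin.cos).add (hq.mul hlin.sin)).congr_deriv ?_
  field_simp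
  ring

theorem integral_mul_pi_sub_two_mul_mul_sin {n : ℕ} (hn : n ≠ 0) :
    ∫ x in (0 : ℝ)..π / 2, x * (π - 2 * x) * sin (2 * n * x)
      = (1 - (-1) ^ n) / (2 * n ^ 3) := by
  have ha : (2 * n : ℝ) ≠ 0 := by positivity
  rw [intervalIntegral.integral_eq_sub_of_hasDerivAt
    (fun x _ => hasDerivAt_mul_pi_sub_two_mul_mul_sin_antideriv ha x)
    (Continuous.intervalIntegrable (by fun_prop) _ _)]
  have hnπ : 2 * n * (π / 2) = n * π := by ring
  simp only [hnπ, cos_nat_mul_pi, sin_nat_mul_pi, mul_zero, cos_zero, sin_zero]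
  field_simp
  ring

theorem hasSum_one_div_two_mul_add_one_pow {p : ℕ} (hp : 1 < p) :
    HasSum (fun m : ℕ => 1 / (2 * (m : ℝ) + 1) ^ p)
      ((1 - 1 / 2 ^ p) * ∑' n : ℕ, 1 / ((n : ℝ) + 1) ^ p) := by
  set f : ℕ → ℝ := fun n => 1 / ((n : ℝ) + 1) ^ p
  have hf : Summable f := by
    simpa [f] using (summable_nat_add_iff 1).2 (Real.summable_one_div_nat_pow.2 hp)
  have hodd : HasSum (fun m => f (2 * m + 1)) (1 / 2 ^ p * ∑' n, f n) := by
    refine (hf.hasSum.mul_left (1 / 2 ^ p)).congr_fun fun m => ?_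
    simp only [f]
    push_cast
    rw [show (2 * (m : ℝ) + 1 + 1) = 2 * (m + 1) by ring, mul_pow]
    field_simp
  have heven : Summable fun m => f (2 * m) :=
    hf.comp_injective fun a b h => by simpa using h
  have hsplit := tsum_even_add_odd heven hodd.summable
  rw [hodd.tsum_eq] at hsplit
  convert heven.hasSum using 1
  · ext m; simp [f]
  · linarith

theorem hasSum_one_sub_neg_one_pow_div_pow {p : ℕ} (hp : 1 < p) :
    HasSum (fun k : ℕ => (1 - (-1) ^ (k + 1)) / ((k : ℝ) + 1) ^ p)
      (2 * (1 - 1 / 2 ^ p) * ∑' n : ℕ, 1 / ((n : ℝ) + 1) ^ p) := by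
  rw [mul_assoc, ← add_zero (2 * _)]
  refine HasSum.even_add_odd ?_ (hasSum_zero.congr_fun fun m => ?_)
  · refine ((hasSum_one_div_two_mul_add_one_pow hp).mul_left 2).congr_fun fun m => ?_
    rw [pow_succ, pow_mul, neg_one_sq, one_pow]
    push_cast
    ring
  · rw [show 2 * m + 1 + 1 = 2 * (m + 1) by ring, pow_mul, neg_one_sq, one_pow, sub_self,
      zero_div]

theorem abs_mul_pi_sub_two_mul_div_sin_le {x : ℝ} (hx : x ∈ Ioc 0 (π / 2)) :
    |x * (π - 2 * x) / sin x| ≤ π ^ 2 / 2 := by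
  obtain ⟨hx0, hxπ⟩ := hx
  have hjordan : 2 / π * x ≤ sin x := mul_le_sin hx0.le hxπ
  have hsin : 0 < sin x := lt_of_lt_of_le (by positivity) hjordan
  rw [abs_of_nonneg (div_nonneg (mul_nonneg hx0.le (by linarith)) hsin.le)]
  calc x * (π - 2 * x) / sin x ≤ x * π / (2 / π * x) :=
        div_le_div₀ (by positivity) (by nlinarith) (by positivity) hjordan
    _ = π ^ 2 / 2 := by field_simp

theorem intervalIntegrable_mul_pi_sub_two_mul_div_sin :
    IntervalIntegrable (fun x => x * (π - 2 * x) / sin x) volume 0 (π / 2) :=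
  (intervalIntegrable_iff_integrableOn_Ioc_of_le (by positivity)).2 <|
    Measure.integrableOn_of_bounded (M := π ^ 2 / 2) (by simp)
      (by fun_prop : Measurable _).aestronglyMeasurable
      ((ae_restrict_iff' measurableSet_Ioc).2
        (.of_forall fun _ => abs_mul_pi_sub_two_mul_div_sin_le))

theorem integral_mul_pi_sub_two_mul_mul_cot_eq_sum_add (N : ℕ) :
    ∫ x in (0 : ℝ)..π / 2, x * (π - 2 * x) * cot x =
      ∑ k ∈ Finset.range N, (1 - (-1) ^ (k + 1)) / ((k : ℝ) + 1) ^ 3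
        + ∫ x in (0 : ℝ)..π / 2, cos ((2 * N + 1) * x) * (x * (π - 2 * x) / sin x) := by
  have hpt : ∀ x ∈ Ι 0 (π / 2), x * (π - 2 * x) * cot x =
      ∑ k ∈ Finset.range N, 2 * (x * (π - 2 * x) * sin (2 * (k + 1) * x))
        + cos ((2 * N + 1) * x) * (x * (π - 2 * x) / sin x) := by
    intro x hx
    rw [uIoc_of_le (by positivity)] at hx
    have hx' : sin x ≠ 0 := (sin_pos_of_pos_of_lt_pi hx.1 (by linarith [hx.2, pi_pos])).ne'
    rw [cot_eq_two_mul_sum_sin_add_cos_div_sin hx' N, mul_add, Finset.mul_sum, Finset.mul_sum]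
    congr 1
    · exact Finset.sum_congr rfl fun _ _ => by ring
    · ring
  have hsum : IntervalIntegrable (fun x => ∑ k ∈ Finset.range N,
      2 * (x * (π - 2 * x) * sin (2 * (k + 1) * x))) volume 0 (π / 2) :=
    Continuous.intervalIntegrable (by fun_prop) _ _
  have hrem : IntervalIntegrable (fun x => cos ((2 * N + 1) * x) * (x * (π - 2 * x) / sin x))
      volume 0 (π / 2) :=
    intervalIntegrable_mul_pi_sub_two_mul_div_sin.continuousOn_mul (by fun_prop)
  rw [intervalIntegral.integral_congr_ae (.of_forall hpt), intervalIntegral.integral_add hsum hrem,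
    intervalIntegral.integral_finsetSum fun k _ =>
      (Continuous.intervalIntegrable (by fun_prop) _ _)]
  congr 1
  refine Finset.sum_congr rfl fun k _ => ?_
  have hcoeff := integral_mul_pi_sub_two_mul_mul_sin k.succ_ne_zero
  push_cast at hcoeff
  rw [intervalIntegral.integral_const_mul, hcoeff]
  field_simp

theorem zeta3_cot_integral :
    (∑' n : ℕ, 1 / ((n : ℝ) + 1) ^ 3) =
      (4 / 7) * ∫ x in (0 : ℝ)..(π / 2), x * (π - 2 * x) * Real.cot x := by
  have hfreq : Tendsto (fun N : ℕ => 2 * (N : ℝ) + 1) atTop (cocompact ℝ) :=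
    (tendsto_atTop_add_const_right _ _
      (tendsto_natCast_atTop_atTop.const_mul_atTop two_pos)).mono_right atTop_le_cocompact
  have hrem : Tendsto (fun N : ℕ => ∫ x in (0 : ℝ)..π / 2,
      cos ((2 * N + 1) * x) * (x * (π - 2 * x) / sin x)) atTop (𝓝 0) :=
    (tendsto_intervalIntegral_cos_mul_cocompact intervalIntegrable_mul_pi_sub_two_mul_div_sin).comp
      hfreq
  have hlim := (hasSum_one_sub_neg_one_pow_div_pow (p := 3) (by norm_num)).tendsto_sum_nat.add hrem
  simp_rw [← integral_mul_pi_sub_two_mul_mul_cot_eq_sum_add, add_zero] at hlim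
  have hvalue := tendsto_nhds_unique tendsto_const_nhds hlim
  linarith
end
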